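/- If α₂ = 1 - α₁ on both sides of a face (α₂⁺ = 1 - α₁⁺, α₂⁻ = 1 - α₁⁻), and the single-material jumps vanish ([p₁] = 0 and [p₂] = 0, i.e. p₁⁺ = p₁⁻ and p₂⁺ = p₂⁻), then {p₁}_{1-α₁⁻}[α₁] + {p₂}_{1-α₂⁺}[α₂] = ((α₁⁺ - α₁⁻)/2)((p₁⁺ - p₂⁺) + (p₁⁻ - p₂⁻)) n⁺. -/

import Mathlib

theorem weighted_cut_face_identity_general
    {d : ℕ} (nplus : EuclideanSpace ℝ (Fin d))
    (nminus : EuclideanSpace ℝ (Fin d)) (hminus : nminus = -nplus)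
    (jump : ℝ → ℝ → EuclideanSpace ℝ (Fin d))
    (hjump : ∀ ζp ζm : ℝ, jump ζp ζm = ζp • nplus + ζm • nminus)
    (avg : ℝ → ℝ → ℝ → ℝ)
    (havg : ∀ g ζp ζm : ℝ, avg g ζp ζm = g * ζp + (1 - g) * ζm)
    (α1p α1m α2p α2m p1p p1m p2p p2m : ℝ)
    (hα2p : α2p = 1 - α1p) (hα2m : α2m = 1 - α1m)
    (hp1 : p1p = p1m) (hp2 : p2p = p2m) :
    (avg (1 - α1m) p1p p1m) • jump α1p α1m + (avg (1 - α2p) p2p p2m) • jump α2p α2m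
      = (((α1p - α1m) / 2) * ((p1p - p2p) + (p1m - p2m))) • nplus := by
  subst hminus hα2p hα2m hp1 hp2
  have jump_eq_sub_smul : ∀ ζp ζm, jump ζp ζm = (ζp - ζm) • nplus := by
    intro ζp ζm
    rw [hjump]
    module
  have avg_self : ∀ g ζ, avg g ζ ζ = ζ := by
    intro g ζ
    rw [havg]
    ring
  rw [jump_eq_sub_smul, jump_eq_sub_smul, avg_self, avg_self]
  module

/-- If `α₂ = 1 - α₁` on both sides and the single-material jumps vanish, then
`{p₁}_{1-α₁⁻}[α₁] + {p₂}_{1-α₂⁺}[α₂] = ((α₁⁺-α₁⁻)/2)((p₁⁺-p₂⁺)+(p₁⁻-p₂⁻)) n⁺`. -/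
theorem weighted_cut_face_identity
    {d : ℕ} (nplus : EuclideanSpace ℝ (Fin d)) (hn : ‖nplus‖ = 1)
    (nminus : EuclideanSpace ℝ (Fin d)) (hminus : nminus = -nplus)
    (jump : ℝ → ℝ → EuclideanSpace ℝ (Fin d))
    (hjump : ∀ ζp ζm : ℝ, jump ζp ζm = ζp • nplus + ζm • nminus)
    (avg : ℝ → ℝ → ℝ → ℝ)
    (havg : ∀ g ζp ζm : ℝ, avg g ζp ζm = g * ζp + (1 - g) * ζm)
    (α1p α1m α2p α2m p1p p1m p2p p2m : ℝ)
    (hα2p : α2p = 1 - α1p) (hα2m : α2m = 1 - α1m)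
    (hp1 : p1p = p1m) (hp2 : p2p = p2m) :
    (avg (1 - α1m) p1p p1m) • jump α1p α1m + (avg (1 - α2p) p2p p2m) • jump α2p α2m
      = (((α1p - α1m) / 2) * ((p1p - p2p) + (p1m - p2m))) • nplus :=
  weighted_cut_face_identity_general nplus nminus hminus jump hjump avg havg α1p α1m α2p α2m p1p p1m
    p2p p2m hα2p hα2m hp1 hp2
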